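/- Let u, h ∈ ℝ^n, let y = S(u), and let (t_k) be a sequence of positive reals with t_k → 0 such that the difference quotients (S(u + t_k h) − S(u))/t_k converge to some η ∈ ℝ^n. Then η belongs to the cone 𝒦(y). -/

import Mathlib

open scoped RealInnerProductSpace BigOperators Classical Topology

noncomputable section

abbrev Euc (n : ℕ) := EuclideanSpace ℝ (Fin n)
abbrev Rows (m d : ℕ) := PiLp 2 (fun _ : Fin m => EuclideanSpace ℝ (Fin d))

variable {n m d : ℕ}

/-- `y` solves the variational inequality VI(u). -/
def IsVISol (A : Euc n →ₗ[ℝ] Euc n) (K : Euc n →ₗ[ℝ] Rows m d) (u y : Euc n) : Prop :=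
  ∀ v : Euc n, ⟪A y, v - y⟫ + ∑ j, (‖K v j‖ - ‖K y j‖) ≥ ⟪u, v - y⟫

/-- `q` is a slack variable for the pair `(u, y)`: primal-dual system. -/
def IsSlack (A : Euc n →ₗ[ℝ] Euc n) (K : Euc n →ₗ[ℝ] Rows m d) (u y : Euc n)
    (q : Rows m d) : Prop :=
  A y + (LinearMap.adjoint K) q = u ∧ (∀ j, ⟪q j, K y j⟫ = ‖K y j‖) ∧ ∀ j, ‖q j‖ ≤ 1

/-- The complementarity relations alone. -/
def ComplRel (K : Euc n →ₗ[ℝ] Rows m d) (y : Euc n) (q : Rows m d) : Prop :=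
  (∀ j, ⟪q j, K y j⟫ = ‖K y j‖) ∧ ∀ j, ‖q j‖ ≤ 1

/-- The cone `𝒦(y)` defined via a slack variable `q`. -/
def KconeQ (K : Euc n →ₗ[ℝ] Rows m d) (y : Euc n) (q : Rows m d) : Set (Euc n) :=
  {v | (∀ j, ‖q j‖ < 1 → K v j = 0) ∧
       ∀ j, ‖q j‖ = 1 → K y j = 0 → ⟪q j, K v j⟫ = ‖K v j‖}

/-- `∑_{j∈ℐ(y)} ⟨(𝕂y)_j/|(𝕂y)_j|, (𝕂v)_j⟩ + ∑_{j∈𝒜(y)} |(𝕂v)_j|`. -/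
def dirRHS (K : Euc n →ₗ[ℝ] Rows m d) (y v : Euc n) : ℝ :=
  ∑ j, if K y j ≠ 0 then ⟪(‖K y j‖)⁻¹ • K y j, K v j⟫ else ‖K v j‖

/-- The cone `𝒦(y)` in its slack-variable-free form. -/
def Kcone (A : Euc n →ₗ[ℝ] Euc n) (K : Euc n →ₗ[ℝ] Rows m d) (u y : Euc n) : Set (Euc n) :=
  {v | ⟪u - A y, v⟫ ≥ dirRHS K y v}

/-- Second order term `∑_{j∈ℐ(y)} ⟨(𝕂η)_j/|(𝕂y)_j| − ⟨(𝕂y)_j,(𝕂η)_j⟩(𝕂y)_j/|(𝕂y)_j|³, (𝕂w)_j⟩`. -/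
def secondForm (K : Euc n →ₗ[ℝ] Rows m d) (y η w : Euc n) : ℝ :=
  ∑ j, if K y j ≠ 0 then
      ⟪(‖K y j‖)⁻¹ • K η j - ((⟪K y j, K η j⟫) / ‖K y j‖ ^ 3) • K y j, K w j⟫
    else 0

/-- The quadratic functional `f_y` whose minimizer over `𝒦(y)` is the directional derivative. -/
def fy (A : Euc n →ₗ[ℝ] Euc n) (K : Euc n →ₗ[ℝ] Rows m d) (y h η : Euc n) : ℝ :=
  (1 / 2) * ⟪η, A η⟫ - ⟪h, η⟫ +
    (1 / 2) * ∑ j, if K y j ≠ 0 then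
        ‖K η j‖ ^ 2 / ‖K y j‖ - (⟪K y j, K η j⟫) ^ 2 / ‖K y j‖ ^ 3
      else 0

/-- `η` solves the VI of the first kind characterizing the directional derivative. -/
def VI1Sol (A : Euc n →ₗ[ℝ] Euc n) (K : Euc n →ₗ[ℝ] Rows m d) (u y h η : Euc n) : Prop :=
  η ∈ Kcone A K u y ∧ ∀ v ∈ Kcone A K u y,
    ⟪A η, v - η⟫ + secondForm K y η (v - η) ≥ ⟪h, v - η⟫

/-- Bouligand subdifferential of a map `S` at `u`. -/
def BSubdiff (S : Euc n → Euc n) (u : Euc n) : Set (Euc n →L[ℝ] Euc n) :=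
  {G | ∃ (uk : ℕ → Euc n) (Gk : ℕ → (Euc n →L[ℝ] Euc n)),
    (∀ k, HasFDerivAt S (Gk k) (uk k)) ∧
    Filter.Tendsto uk Filter.atTop (nhds u) ∧
    Filter.Tendsto Gk Filter.atTop (nhds G)}

/-- Biactive set associated with `y` and a slack variable `q`. -/
def Biactive (K : Euc n →ₗ[ℝ] Rows m d) (y : Euc n) (q : Rows m d) : Set (Fin m) :=
  {j | K y j = 0 ∧ ‖q j‖ = 1}

/-- The subspace `V` associated with a splitting `ℬ₀ ∪ ℬ₁` of the biactive set. -/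
def Vsub (K : Euc n →ₗ[ℝ] Rows m d) (q : Rows m d) (B0 B1 : Set (Fin m)) : Set (Euc n) :=
  {v | (∀ j, ‖q j‖ < 1 → K v j = 0) ∧ (∀ j ∈ B0, K v j = 0) ∧
       ∀ j ∈ B1, ∃ c : ℝ, K v j = c • q j}

/-! Testing VI(u') at `v = y` and bounding each `‖(𝕂y')_j‖ - ‖(𝕂y)_j‖` from below by a
subgradient of the norm at `(𝕂y)_j` gives `dirRHS K y (y' - y) ≤ ⟪u' - A y', y' - y⟫` for
`y' = S u'`. Both sides are positively homogeneous in `y' - y`, so the inequality survives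
division by `t_k` with `u' = u + t_k h`; since `S (u + t_k h) → S u`, letting `k → ∞` gives
`dirRHS K y η ≤ ⟪u - A y, η⟫`, i.e. `η ∈ 𝒦(y)`. -/

open Filter Topology

theorem inner_inv_norm_smul_sub_le_norm_sub_norm {E : Type*} [NormedAddCommGroup E]
    [InnerProductSpace ℝ E] {a : E} (ha : a ≠ 0) (b : E) :
    ⟪‖a‖⁻¹ • a, b - a⟫ ≤ ‖b‖ - ‖a‖ := by
  have hna : ‖a‖ ≠ 0 := norm_ne_zero_iff.mpr ha
  calc ⟪‖a‖⁻¹ • a, b - a⟫ = ⟪‖a‖⁻¹ • a, b⟫ - ‖a‖ := by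
        rw [inner_sub_right, real_inner_smul_left a a, real_inner_self_eq_norm_sq]
        field_simp
    _ ≤ ‖b‖ - ‖a‖ := by
        gcongr
        refine (real_inner_le_norm _ b).trans_eq ?_
        rw [norm_smul, norm_inv, norm_norm, inv_mul_cancel₀ hna, one_mul]

theorem tendsto_of_tendsto_inv_smul_sub {α E : Type*} [NormedAddCommGroup E]
    [NormedSpace ℝ E] {l : Filter α} {x : α → E} {x₀ η : E} {t : α → ℝ}
    (ht : ∀ k, t k ≠ 0) (ht0 : Tendsto t l (𝓝 0))
    (hq : Tendsto (fun k => (t k)⁻¹ • (x k - x₀)) l (𝓝 η)) :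
    Tendsto x l (𝓝 x₀) := by
  have hx : ∀ k, x₀ + t k • ((t k)⁻¹ • (x k - x₀)) = x k := fun k => by
    rw [smul_inv_smul₀ (ht k), add_sub_cancel]
  simpa [hx] using tendsto_const_nhds (x := x₀) |>.add (ht0.smul hq)

section DirRHS

variable (K : Euc n →ₗ[ℝ] Rows m d)

theorem dirRHS_smul (y v : Euc n) {c : ℝ} (hc : 0 ≤ c) :
    dirRHS K y (c • v) = c * dirRHS K y v := by
  simp only [dirRHS, Finset.mul_sum, map_smul]
  refine Finset.sum_congr rfl fun j _ => ?_
  split_ifs <;> simp [inner_smul_right, norm_smul, abs_of_nonneg hc]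

theorem dirRHS_sub_le (y z : Euc n) : dirRHS K y (z - y) ≤ ∑ j, (‖K z j‖ - ‖K y j‖) := by
  refine Finset.sum_le_sum fun j _ => ?_
  split_ifs with hj
  · simpa [map_sub] using inner_inv_norm_smul_sub_le_norm_sub_norm hj (K z j)
  · simp [not_not.mp hj]

theorem continuous_dirRHS (y : Euc n) : Continuous (dirRHS K y) := by
  refine continuous_finsetSum _ fun j _ => ?_
  have hKj : Continuous fun v => K v j :=
    ((PiLp.proj (𝕜 := ℝ) 2 (fun _ : Fin m => EuclideanSpace ℝ (Fin d)) j).toLinearMap ∘ₗ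
      K).continuous_of_finiteDimensional
  split_ifs
  · exact continuous_const.inner hKj
  · exact hKj.norm

theorem IsVISol.dirRHS_smul_sub_le {A : Euc n →ₗ[ℝ] Euc n} {u' y' : Euc n}
    (hsol : IsVISol A K u' y') (y : Euc n) {c : ℝ} (hc : 0 ≤ c) :
    dirRHS K y (c • (y' - y)) ≤ ⟪u' - A y', c • (y' - y)⟫ := by
  have hunscaled : dirRHS K y (y' - y) ≤ ⟪u' - A y', y' - y⟫ := by
    have hVI := hsol y
    have hsub := dirRHS_sub_le K y y'
    rw [← neg_sub y' y, inner_neg_right, inner_neg_right, Finset.sum_sub_distrib] at hVI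
    rw [Finset.sum_sub_distrib] at hsub
    rw [inner_sub_left]
    linarith
  rw [dirRHS_smul K y _ hc, real_inner_smul_right]
  exact mul_le_mul_of_nonneg_left hunscaled hc

end DirRHS

theorem stmt11_general {n m d : ℕ} (A : Euc n →ₗ[ℝ] Euc n)
    (K : Euc n →ₗ[ℝ] Rows m d)
    (S : Euc n → Euc n) (hS : ∀ u : Euc n, IsVISol A K u (S u))
    (u h η : Euc n) (t : ℕ → ℝ) (ht : ∀ k, 0 < t k)
    (ht0 : Filter.Tendsto t Filter.atTop (nhds 0))
    (hquot : Filter.Tendsto (fun k => (t k)⁻¹ • (S (u + t k • h) - S u))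
      Filter.atTop (nhds η)) :
    η ∈ Kcone A K u (S u) := by
  have hSconv : Tendsto (fun k => S (u + t k • h)) atTop (𝓝 (S u)) :=
    tendsto_of_tendsto_inv_smul_sub (fun k => (ht k).ne') ht0 hquot
  have hshift : Tendsto (fun k => u + t k • h) atTop (𝓝 u) := by
    simpa using tendsto_const_nhds (x := u) |>.add (ht0.smul_const h)
  have hlhs := ((continuous_dirRHS K (S u)).tendsto η).comp hquot
  have hrhs := (hshift.sub ((A.continuous_of_finiteDimensional.tendsto _).comp hSconv)).inner
    (𝕜 := ℝ) hquot
  exact le_of_tendsto_of_tendsto' hlhs hrhs fun k =>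
    (hS _).dirRHS_smul_sub_le K (S u) (inv_nonneg.mpr (ht k).le)

/-- limits of difference quotients of `S` belong to the cone `𝒦(y)`. -/
theorem stmt11 {n m d : ℕ} (A : Euc n →ₗ[ℝ] Euc n)
    (hAsymm : ∀ x z : Euc n, ⟪A x, z⟫ = ⟪x, A z⟫)
    (hApos : ∀ x : Euc n, x ≠ 0 → 0 < ⟪x, A x⟫)
    (K : Euc n →ₗ[ℝ] Rows m d) (hK : Function.Injective K)
    (S : Euc n → Euc n) (hS : ∀ u : Euc n, IsVISol A K u (S u))
    (u h η : Euc n) (t : ℕ → ℝ) (ht : ∀ k, 0 < t k)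
    (ht0 : Filter.Tendsto t Filter.atTop (nhds 0))
    (hquot : Filter.Tendsto (fun k => (t k)⁻¹ • (S (u + t k • h) - S u))
      Filter.atTop (nhds η)) :
    η ∈ Kcone A K u (S u) :=
  stmt11_general A K S hS u h η t ht ht0 hquot
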